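/- Let F_t = {f_{(i,t)}(x) := t·f_i(x) + q_i : 1 ≤ i ≤ N} be a one-parameter affine family on ℝ^d with joint spectral radius ρ(F) > 0 and t_0 := 1/ρ(F). Then for every t with 0 ≤ t < t_0 the IFS F_t has an attractor A_t, and for every t ≥ t_0 the IFS F_t has no attractor. In other words, t_0 = 1/ρ(F) is the threshold for the existence of the attractor. -/

import Mathlib

open Metric Filter Set
open scoped RealInnerProductSpace

noncomputable section

/-- The Hutchinson operator associated with a family of maps. -/
def hutch {ι E : Type*} (f : ι → E → E) (K : Set E) : Set E := ⋃ i, f i '' K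

/-- `A` is the attractor of the IFS `f`: `A` is a nonempty compact set such that the iterates
of the Hutchinson operator applied to any nonempty compact set converge to `A` in the
Hausdorff metric. -/
def IsAttractor {ι E : Type*} [MetricSpace E] (f : ι → E → E) (A : Set E) : Prop :=
  A.Nonempty ∧ IsCompact A ∧
    ∀ K : Set E, K.Nonempty → IsCompact K →
      Tendsto (fun n : ℕ => hausdorffDist ((hutch f)^[n] K) A) atTop (nhds 0)

/-- The joint spectral radius of a finite family of continuous linear maps. -/
def jsr {E : Type*} [NormedAddCommGroup E] [NormedSpace ℝ E] {N : ℕ}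
    (L : Fin N → E →L[ℝ] E) : ℝ :=
  limsup (fun k : ℕ =>
    (⨆ σ : Fin k → Fin N, ‖(List.ofFn fun j : Fin k => L (σ j)).prod‖) ^ ((1 : ℝ) / (k : ℝ)))
    atTop

/-- The one-parameter affine family `f_{(i,t)}(x) = t • f_i(x) + q_i` where
`f_i(x) = L_i x + a_i`. -/
def fam {E : Type*} [NormedAddCommGroup E] [NormedSpace ℝ E] {N : ℕ}
    (L : Fin N → E →L[ℝ] E) (a q : Fin N → E) (t : ℝ) (i : Fin N) (x : E) : E :=
  t • (L i x + a i) + q i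

/-- The family is linear: every `f_{(i,t)}`, `t ∈ [0, t₀)`, is conjugate to a linear map by a
single invertible affine map `h` independent of `i` and `t`. -/
def IsLinearFamily {E : Type*} [NormedAddCommGroup E] [NormedSpace ℝ E] {N : ℕ}
    (L : Fin N → E →L[ℝ] E) (a q : Fin N → E) : Prop :=
  ∃ h : E ≃ᵃ[ℝ] E, ∀ i : Fin N, ∀ t : ℝ, 0 ≤ t → t < 1 / jsr L →
    ∃ M : E →ₗ[ℝ] E, ∀ x, fam L a q t i x = h.symm (M (h x))

/-- The family is quasi-linear: for each `t ∈ [0, t₀)` there is an invertible affine map `h_t`,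
independent of `i`, conjugating every `f_{(i,t)}` to a linear map. -/
def IsQuasiLinearFamily {E : Type*} [NormedAddCommGroup E] [NormedSpace ℝ E] {N : ℕ}
    (L : Fin N → E →L[ℝ] E) (a q : Fin N → E) : Prop :=
  ∀ t : ℝ, 0 ≤ t → t < 1 / jsr L → ∃ h : E ≃ᵃ[ℝ] E, ∀ i : Fin N,
    ∃ M : E →ₗ[ℝ] E, ∀ x, fam L a q t i x = h.symm (M (h x))

/-- The family is semi-linear: for each `i` there is an invertible affine map `h_i`,
independent of `t`, conjugating `f_{(i,t)}` to a linear map for all `t ∈ [0, t₀)`. -/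
def IsSemiLinearFamily {E : Type*} [NormedAddCommGroup E] [NormedSpace ℝ E] {N : ℕ}
    (L : Fin N → E →L[ℝ] E) (a q : Fin N → E) : Prop :=
  ∀ i : Fin N, ∃ h : E ≃ᵃ[ℝ] E, ∀ t : ℝ, 0 ≤ t → t < 1 / jsr L →
    ∃ M : E →ₗ[ℝ] E, ∀ x, fam L a q t i x = h.symm (M (h x))

/-- The hyperplane `{x | φ x = c}` (with `φ` a nonzero linear functional) separates `S`:
it misses `S` and `S` meets both open half-spaces. -/
def SeparatesHyp {E : Type*} [AddCommGroup E] [Module ℝ E]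
    (φ : E →ₗ[ℝ] ℝ) (c : ℝ) (S : Set E) : Prop :=
  φ ≠ 0 ∧ (∀ x ∈ S, φ x ≠ c) ∧ (∃ x ∈ S, φ x < c) ∧ (∃ x ∈ S, c < φ x)

/-- A set is strongly disconnected if some hyperplane separates it. -/
def StronglyDisconnected {E : Type*} [AddCommGroup E] [Module ℝ E] (S : Set E) : Prop :=
  ∃ (φ : E →ₗ[ℝ] ℝ) (c : ℝ), SeparatesHyp φ c S

/-- A set is weakly connected if no hyperplane separates it. -/
def WeaklyConnected {E : Type*} [AddCommGroup E] [Module ℝ E] (S : Set E) : Prop :=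
  ¬ StronglyDisconnected S

/-- A weak component of a compact set `S` is a maximal weakly connected compact subset of `S`. -/
def IsWeakComponent {E : Type*} [NormedAddCommGroup E] [NormedSpace ℝ E]
    (S C : Set E) : Prop :=
  C.Nonempty ∧ C ⊆ S ∧ IsCompact C ∧ WeaklyConnected C ∧
    ∀ C' : Set E, C' ⊆ S → IsCompact C' → WeaklyConnected C' → C ⊆ C' → C' = C

/-- A (nondegenerate right circular) cone with apex `x`, axis direction `v`, radius `r` and
half-angle `θ`. -/
def coneSet {E : Type*} [NormedAddCommGroup E] [InnerProductSpace ℝ E]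
    (x v : E) (r θ : ℝ) : Set E :=
  {y | ‖y - x‖ ≤ r ∧ ‖y - x‖ * Real.cos θ ≤ ⟪y - x, v⟫}

/-- A boundary point `x` of `K` is a cusp of `K` if no cone with apex `x` is contained in `K`. -/
def IsCuspPoint {E : Type*} [NormedAddCommGroup E] [InnerProductSpace ℝ E]
    (K : Set E) (x : E) : Prop :=
  x ∈ frontier K ∧ ∀ (v : E) (r θ : ℝ), ‖v‖ = 1 → 0 < r → 0 < θ → θ < Real.pi / 2 →
    ¬ coneSet x v r θ ⊆ K

/-- The one-parameter family is tame: whenever the attractor `A_t` has nonempty interior,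
some fixed point of a map of `F_t` is not a cusp of `A_t`. -/
def TameFamily {E : Type*} [NormedAddCommGroup E] [InnerProductSpace ℝ E] {N : ℕ}
    (L : Fin N → E →L[ℝ] E) (a q : Fin N → E) : Prop :=
  ∀ t : ℝ, 0 ≤ t → t < 1 / jsr L → ∀ A : Set E, IsAttractor (fam L a q t) A →
    (interior A).Nonempty → ∃ (i : Fin N) (x : E), fam L a q t i x = x ∧ ¬ IsCuspPoint A x

end


/-!
Let `s_k` be the largest operator norm of a product of `k` of the linear parts `L_i`. It is
submultiplicative, so Fekete's lemma applied to `log s_k` gives `ρ ≤ s_n^{1/n}` for every `n ≥ 1`,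
while `ρ < c` forces `s_n^{1/n} < c` for some `n`. A composition of `n` maps of `F_t` is affine
with linear part `t^n` times such a product.

For `t < t₀` some `t^n s_n` is `< 1`, so the `n`-th iterate of the Hutchinson operator is a
contraction of the complete space of nonempty compact sets; its fixed point then attracts every
orbit of the Hutchinson operator itself. For `t ≥ t₀` every `t^n s_n` is `≥ 1`, so some
composition of `n` maps stretches a diameter of the ball of radius `R = diam A + 2` to length
`> R`; but once `F_t^n(ball)` is Hausdorff-close to `A`, its diameter is `< R`.
-/

open Function NNReal Topology TopologicalSpace

section Words

variable {ι M : Type*} [Monoid M]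

def wordProd (g : ι → M) {k : ℕ} (σ : Fin k → ι) : M :=
  (List.ofFn fun j => g (σ j)).prod

lemma wordProd_succ (g : ι → M) {k : ℕ} (σ : Fin (k + 1) → ι) :
    wordProd g σ = g (σ 0) * wordProd g (Fin.tail σ) := by
  simp [wordProd, List.ofFn_succ, Fin.tail]

lemma wordProd_append (g : ι → M) {m k : ℕ} (σ : Fin (m + k) → ι) :
    wordProd g σ =
      wordProd g (fun j => σ (Fin.castAdd k j)) * wordProd g (fun j => σ (Fin.natAdd m j)) := by
  simp only [wordProd, List.ofFn_add, List.prod_append]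
  rfl

variable {E : Type*}

def wordComp (f : ι → E → E) {k : ℕ} (σ : Fin k → ι) : E → E :=
  wordProd (M := Function.End E) f σ

lemma wordComp_zero (f : ι → E → E) (σ : Fin 0 → ι) : wordComp f σ = id := rfl

lemma wordComp_succ (f : ι → E → E) {k : ℕ} (σ : Fin (k + 1) → ι) :
    wordComp f σ = f (σ 0) ∘ wordComp f (Fin.tail σ) :=
  wordProd_succ (M := Function.End E) f σ

end Words

section Hutchinson

variable {ι E : Type*}

lemma hutch_iterate (f : ι → E → E) (n : ℕ) (K : Set E) :
    (hutch f)^[n] K = hutch (fun σ : Fin n → ι => wordComp f σ) K := by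
  induction n with
  | zero => simp [hutch, wordComp_zero, iUnion_const]
  | succ n ih =>
    rw [iterate_succ_apply', ih]
    ext p
    simp only [hutch, mem_iUnion, mem_image]
    constructor
    · rintro ⟨i, -, ⟨τ, x, hx, rfl⟩, rfl⟩
      exact ⟨Fin.cons i τ, x, hx, by simp [wordComp_succ, Fin.tail_cons]⟩
    · rintro ⟨σ, x, hx, rfl⟩
      exact ⟨σ 0, _, ⟨Fin.tail σ, x, hx, rfl⟩, by rw [wordComp_succ]; rfl⟩

lemma wordComp_mem_hutch_iterate (f : ι → E → E) {n : ℕ} (σ : Fin n → ι) {K : Set E} {x : E}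
    (hx : x ∈ K) : wordComp f σ x ∈ (hutch f)^[n] K := by
  rw [hutch_iterate]
  exact mem_iUnion.2 ⟨σ, mem_image_of_mem _ hx⟩

variable [TopologicalSpace E] [Finite ι]

lemma isCompact_hutch {f : ι → E → E} (hf : ∀ i, Continuous (f i)) {K : Set E}
    (hK : IsCompact K) : IsCompact (hutch f K) :=
  isCompact_iUnion fun i => hK.image (hf i)

lemma isCompact_hutch_iterate {f : ι → E → E} (hf : ∀ i, Continuous (f i)) {K : Set E}
    (hK : IsCompact K) (n : ℕ) : IsCompact ((hutch f)^[n] K) := by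
  induction n with
  | zero => exact hK
  | succ n ih => rw [iterate_succ_apply']; exact isCompact_hutch hf ih

end Hutchinson

lemma ContractingWith.tendsto_iterate_of_iterate {α : Type*} [MetricSpace α] [Nonempty α]
    [CompleteSpace α] {T : α → α} {n : ℕ} (hn : n ≠ 0) {c : ℝ≥0} (hT : ContractingWith c T^[n])
    (x : α) : Tendsto (fun m => T^[m] x) atTop (𝓝 (fixedPoint _ hT)) := by
  intro U hU
  refine Eventually.atTop_of_arithmetic hn fun r _ => ?_
  filter_upwards [(hT.tendsto_iterate_fixedPoint (T^[r] x)).eventually_mem hU] with k hk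
  rwa [iterate_add_apply, iterate_mul]

lemma LipschitzWith.exists_edist_image_le {E F : Type*} [PseudoEMetricSpace E]
    [PseudoEMetricSpace F] {f : E → F} {c : ℝ≥0} (hf : LipschitzWith c f) {s t : Set E}
    (ht : IsCompact t) (htne : t.Nonempty) :
    ∀ x ∈ f '' s, ∃ y ∈ f '' t, edist x y ≤ c * hausdorffEDist s t := by
  rintro _ ⟨x, hx, rfl⟩
  obtain ⟨y, hy, hxy⟩ := ht.exists_infEDist_eq_edist htne x
  refine ⟨f y, mem_image_of_mem f hy, (hf x y).trans ?_⟩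
  gcongr
  exact hxy ▸ infEDist_le_hausdorffEDist_of_mem hx

section HutchinsonOperator

variable {ι E : Type*} [Finite ι] [Nonempty ι] [MetricSpace E]

def hutchMap (f : ι → E → E) (hf : ∀ i, Continuous (f i)) (K : NonemptyCompacts E) :
    NonemptyCompacts E :=
  ⟨⟨hutch f K, isCompact_hutch hf K.isCompact⟩,
    nonempty_iUnion.2 ⟨Classical.arbitrary ι, K.nonempty.image _⟩⟩

lemma coe_hutchMap_iterate (f : ι → E → E) (hf : ∀ i, Continuous (f i)) (n : ℕ)
    (K : NonemptyCompacts E) : ((hutchMap f hf)^[n] K : Set E) = (hutch f)^[n] K :=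
  Semiconj.iterate_right (f := ((↑) : NonemptyCompacts E → Set E)) (ga := hutchMap f hf)
    (gb := hutch f) (fun _ => rfl) n K

lemma hutchMap_iterate (f : ι → E → E) (hf : ∀ i, Continuous (f i)) (n : ℕ)
    (hw : ∀ σ : Fin n → ι, Continuous (wordComp f σ)) :
    (hutchMap f hf)^[n] = hutchMap _ hw :=
  funext fun K => NonemptyCompacts.ext <| by
    rw [coe_hutchMap_iterate, hutch_iterate]
    rfl

lemma lipschitzWith_hutchMap {f : ι → E → E} {c : ℝ≥0} (hf : ∀ i, LipschitzWith c (f i)) :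
    LipschitzWith c (hutchMap f fun i => (hf i).continuous) := by
  intro K K'
  show hausdorffEDist (hutch f K) (hutch f K') ≤ c * hausdorffEDist (K : Set E) K'
  refine hausdorffEDist_iUnion_le.trans (iSup_le fun i => ?_)
  refine hausdorffEDist_le_of_mem_edist
    ((hf i).exists_edist_image_le K'.isCompact K'.nonempty) fun x hx => ?_
  obtain ⟨y, hy, hxy⟩ := (hf i).exists_edist_image_le K.isCompact K.nonempty x hx
  exact ⟨y, hy, by rwa [hausdorffEDist_comm]⟩

theorem exists_isAttractor_of_lipschitzWith_wordComp [CompleteSpace E] [Nonempty E]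
    {f : ι → E → E} (hf : ∀ i, Continuous (f i)) {n : ℕ} (hn : n ≠ 0) {c : ℝ≥0} (hc : c < 1)
    (hw : ∀ σ : Fin n → ι, LipschitzWith c (wordComp f σ)) :
    ∃ A, IsAttractor f A := by
  have hT : ContractingWith c (hutchMap f hf)^[n] := by
    rw [hutchMap_iterate f hf n fun σ => (hw σ).continuous]
    exact ⟨hc, lipschitzWith_hutchMap hw⟩
  set A := ContractingWith.fixedPoint _ hT
  refine ⟨A, A.nonempty, A.isCompact, fun K hK hKc => ?_⟩
  have := tendsto_iff_dist_tendsto_zero.1 <|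
    hT.tendsto_iterate_of_iterate hn (⟨⟨K, hKc⟩, hK⟩ : NonemptyCompacts E)
  simp only [NonemptyCompacts.dist_eq, coe_hutchMap_iterate] at this
  exact this

end HutchinsonOperator

lemma IsAttractor.eventually_dist_lt {ι E : Type*} [Finite ι] [MetricSpace E] {f : ι → E → E}
    (hf : ∀ i, Continuous (f i)) {A : Set E} (hA : IsAttractor f A) {K : Set E}
    (hK : K.Nonempty) (hKc : IsCompact K) :
    ∀ᶠ n in atTop, ∀ x ∈ (hutch f)^[n] K, ∀ y ∈ (hutch f)^[n] K, dist x y < diam A + 2 := by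
  obtain ⟨hAne, hAc, hconv⟩ := hA
  filter_upwards [(hconv K hK hKc).eventually_lt_const one_pos] with n hn x hx y hy
  have hfin : hausdorffEDist ((hutch f)^[n] K) A ≠ ⊤ :=
    hausdorffEDist_ne_top_of_nonempty_of_bounded ⟨x, hx⟩ hAne
      (isCompact_hutch_iterate hf hKc n).isBounded hAc.isBounded
  obtain ⟨x', hx', hxx'⟩ := exists_dist_lt_of_hausdorffDist_lt hx hn hfin
  obtain ⟨y', hy', hyy'⟩ := exists_dist_lt_of_hausdorffDist_lt hy hn hfin
  have hx'y' := dist_le_diam_of_mem hAc.isBounded hx' hy'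
  linarith [dist_triangle4 x x' y' y, dist_comm y y']

section JointSpectralRadius

variable {E : Type*} [NormedAddCommGroup E] [NormedSpace ℝ E] {N : ℕ} (L : Fin N → E →L[ℝ] E)

noncomputable def wordNormSup (k : ℕ) : ℝ := ⨆ σ : Fin k → Fin N, ‖wordProd L σ‖

lemma jsr_eq_limsup :
    jsr L = limsup (fun k : ℕ => wordNormSup L k ^ ((1 : ℝ) / k)) atTop :=
  rfl

lemma norm_wordProd_le_wordNormSup {k : ℕ} (σ : Fin k → Fin N) :
    ‖wordProd L σ‖ ≤ wordNormSup L k :=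
  le_ciSup (f := fun σ : Fin k → Fin N => ‖wordProd L σ‖) (finite_range _).bddAbove σ

lemma wordNormSup_nonneg (k : ℕ) : 0 ≤ wordNormSup L k :=
  Real.iSup_nonneg fun _ => norm_nonneg _

lemma jsr_eq_zero (h : ∀ k ≠ 0, wordNormSup L k = 0) : jsr L = 0 := by
  have hev : (fun k : ℕ => wordNormSup L k ^ ((1 : ℝ) / k)) =ᶠ[atTop] fun _ => 0 := by
    filter_upwards [eventually_ne_atTop 0] with k hk
    rw [h k hk, Real.zero_rpow (by positivity)]
  exact (limsup_congr hev).trans (limsup_const 0)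

lemma nonempty_of_jsr_pos (hρ : 0 < jsr L) : Nonempty (Fin N) := by
  by_contra hN
  refine hρ.ne' (jsr_eq_zero L fun k hk => ?_)
  have : IsEmpty (Fin k → Fin N) := ⟨fun σ => hN ⟨σ ⟨0, Nat.pos_of_ne_zero hk⟩⟩⟩
  exact Real.iSup_of_isEmpty _

lemma nontrivial_of_jsr_pos (hρ : 0 < jsr L) : Nontrivial E := by
  by_contra hE
  have : Subsingleton E := not_nontrivial_iff_subsingleton.1 hE
  refine hρ.ne' (jsr_eq_zero L fun k _ => ?_)
  simp [wordNormSup, Subsingleton.elim (wordProd L _) 0]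

variable [Nonempty (Fin N)]

lemma wordNormSup_le {k : ℕ} {b : ℝ} (h : ∀ σ : Fin k → Fin N, ‖wordProd L σ‖ ≤ b) :
    wordNormSup L k ≤ b :=
  ciSup_le h

lemma wordNormSup_add_le (m k : ℕ) :
    wordNormSup L (m + k) ≤ wordNormSup L m * wordNormSup L k :=
  wordNormSup_le L fun σ => by
    rw [wordProd_append]
    exact (norm_mul_le _ _).trans <| mul_le_mul (norm_wordProd_le_wordNormSup L _)
      (norm_wordProd_le_wordNormSup L _) (norm_nonneg _) (wordNormSup_nonneg L m)

lemma wordNormSup_succ_le_pow (k : ℕ) : wordNormSup L (k + 1) ≤ wordNormSup L 1 ^ (k + 1) := by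
  induction k with
  | zero => simp
  | succ k ih =>
    calc wordNormSup L (k + 1 + 1) ≤ wordNormSup L (k + 1) * wordNormSup L 1 :=
          wordNormSup_add_le L _ _
      _ ≤ wordNormSup L 1 ^ (k + 1) * wordNormSup L 1 := by
          gcongr
          exact wordNormSup_nonneg L 1
      _ = wordNormSup L 1 ^ (k + 1 + 1) := (pow_succ _ _).symm

lemma rpow_wordNormSup_le {k : ℕ} (hk : k ≠ 0) :
    wordNormSup L k ^ ((1 : ℝ) / k) ≤ wordNormSup L 1 := by
  obtain ⟨k, rfl⟩ := Nat.exists_eq_succ_of_ne_zero hk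
  calc wordNormSup L (k + 1) ^ ((1 : ℝ) / (k + 1 : ℕ))
      ≤ (wordNormSup L 1 ^ (k + 1)) ^ ((1 : ℝ) / (k + 1 : ℕ)) := by
        gcongr
        · exact wordNormSup_nonneg L _
        · exact wordNormSup_succ_le_pow L k
    _ = wordNormSup L 1 := by
        rw [one_div, Real.pow_rpow_inv_natCast (wordNormSup_nonneg L 1) hk]

lemma exists_rpow_wordNormSup_lt {c : ℝ} (hc : jsr L < c) :
    ∃ n ≠ 0, wordNormSup L n ^ ((1 : ℝ) / n) < c := by
  have hbdd : IsBoundedUnder (· ≤ ·) atTop fun k : ℕ => wordNormSup L k ^ ((1 : ℝ) / k) :=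
    isBoundedUnder_of_eventually_le <|
      (eventually_ne_atTop 0).mono fun k hk => rpow_wordNormSup_le L hk
  obtain ⟨n, hlt, hn⟩ := ((eventually_lt_of_limsup_lt hc hbdd).and (eventually_ne_atTop 0)).exists
  exact ⟨n, hn, hlt⟩

lemma wordNormSup_pos [Nontrivial E] (hL : ∀ i, Injective (L i)) (k : ℕ) :
    0 < wordNormSup L k := by
  obtain ⟨σ⟩ : Nonempty (Fin k → Fin N) := inferInstance
  have hinj : Injective ⇑(wordProd L σ) := by
    induction k with
    | zero => exact injective_id
    | succ k ih =>
      rw [wordProd_succ]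
      exact (hL _).comp (ih _)
  obtain ⟨x, hx⟩ := exists_ne (0 : E)
  refine (norm_pos_iff.2 fun h => hx (hinj ?_)).trans_le (norm_wordProd_le_wordNormSup L σ)
  simp [h]

lemma jsr_le_rpow_wordNormSup (hpos : ∀ k, 0 < wordNormSup L k) {n : ℕ} (hn : n ≠ 0) :
    jsr L ≤ wordNormSup L n ^ ((1 : ℝ) / n) := by
  have hsub : Subadditive fun k => Real.log (wordNormSup L k) := fun m k => by
    rw [← Real.log_mul (hpos m).ne' (hpos k).ne']
    exact Real.log_le_log (hpos _) (wordNormSup_add_le L m k)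
  refine le_of_forall_gt_imp_ge_of_dense fun c hc => ?_
  have hc0 : 0 < c := (Real.rpow_pos_of_pos (hpos n) _).trans hc
  have hlog : Real.log (wordNormSup L n) / n < Real.log c := by
    have := Real.log_lt_log (Real.rpow_pos_of_pos (hpos n) _) hc
    rwa [Real.log_rpow (hpos n), one_div_mul_eq_div] at this
  rw [jsr_eq_limsup]
  refine limsup_le_of_le (isCoboundedUnder_le_of_le atTop fun k =>
    Real.rpow_nonneg (wordNormSup_nonneg L k) _) ?_
  filter_upwards [hsub.eventually_div_lt_of_div_lt hn hlog] with k hk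
  rw [Real.rpow_def_of_pos (hpos k), ← Real.exp_log hc0, mul_one_div]
  exact (Real.exp_lt_exp.2 hk).le

end JointSpectralRadius

section Threshold

variable {E : Type*} [NormedAddCommGroup E] [NormedSpace ℝ E] {N : ℕ} (L : Fin N → E →L[ℝ] E)

lemma pow_mul_wordNormSup_eq (t : ℝ) {n : ℕ} (hn : n ≠ 0) :
    t ^ n * wordNormSup L n = (t * wordNormSup L n ^ ((1 : ℝ) / n)) ^ n := by
  rw [mul_pow, one_div, Real.rpow_inv_natCast_pow (wordNormSup_nonneg L n) hn]

lemma exists_pow_mul_wordNormSup_lt_one [Nonempty (Fin N)] {t : ℝ} (ht0 : 0 ≤ t)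
    (ht : t * jsr L < 1) : ∃ n ≠ 0, t ^ n * wordNormSup L n < 1 := by
  rcases ht0.eq_or_lt with rfl | htpos
  · exact ⟨1, one_ne_zero, by simp⟩
  obtain ⟨n, hn, hlt⟩ := exists_rpow_wordNormSup_lt L (c := 1 / t)
    (by rwa [lt_div_iff₀ htpos, mul_comm])
  refine ⟨n, hn, ?_⟩
  rw [pow_mul_wordNormSup_eq L t hn]
  exact pow_lt_one₀ (mul_nonneg ht0 (Real.rpow_nonneg (wordNormSup_nonneg L n) _)) (by rwa [lt_div_iff₀ htpos, mul_comm] at hlt) hn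

lemma one_le_pow_mul_wordNormSup (hL : ∀ i, Injective (L i)) (hρ : 0 < jsr L) {t : ℝ}
    (ht : 1 ≤ t * jsr L) {n : ℕ} (hn : n ≠ 0) : 1 ≤ t ^ n * wordNormSup L n := by
  have := nonempty_of_jsr_pos L hρ
  have := nontrivial_of_jsr_pos L hρ
  have ht0 : 0 ≤ t := (pos_of_mul_pos_left (one_pos.trans_le ht) hρ.le).le
  rw [pow_mul_wordNormSup_eq L t hn]
  refine one_le_pow₀ (ht.trans ?_)
  gcongr
  exact jsr_le_rpow_wordNormSup L (wordNormSup_pos L hL) hn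

end Threshold

section AffineFamily

variable {E : Type*} [NormedAddCommGroup E] [NormedSpace ℝ E] {N : ℕ} (L : Fin N → E →L[ℝ] E)
  (a q : Fin N → E) (t : ℝ)

lemma continuous_fam (i : Fin N) : Continuous (fam L a q t i) := by
  unfold fam
  fun_prop

lemma fam_sub_fam (i : Fin N) (x y : E) : fam L a q t i x - fam L a q t i y = t • L i (x - y) := by
  simp only [fam, map_sub]
  module

lemma wordComp_fam_sub {k : ℕ} (σ : Fin k → Fin N) (x y : E) :
    wordComp (fam L a q t) σ x - wordComp (fam L a q t) σ y = t ^ k • wordProd L σ (x - y) := by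
  induction k with
  | zero => simp [wordComp_zero, wordProd]
  | succ k ih =>
    rw [wordComp_succ, comp_apply, comp_apply, fam_sub_fam, ih, map_smul, smul_smul,
      wordProd_succ, pow_succ']
    rfl

lemma dist_wordComp_fam {t : ℝ} (ht : 0 ≤ t) {k : ℕ} (σ : Fin k → Fin N) (x y : E) :
    dist (wordComp (fam L a q t) σ x) (wordComp (fam L a q t) σ y) =
      t ^ k * ‖wordProd L σ (x - y)‖ := by
  rw [dist_eq_norm, wordComp_fam_sub, norm_smul, Real.norm_of_nonneg (pow_nonneg ht k)]

lemma lipschitzWith_wordComp_fam {t : ℝ} (ht : 0 ≤ t) {k : ℕ} (σ : Fin k → Fin N) :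
    LipschitzWith (t ^ k * wordNormSup L k).toNNReal (wordComp (fam L a q t) σ) :=
  LipschitzWith.of_dist_le' fun x y => by
    rw [dist_wordComp_fam L a q ht, dist_eq_norm, mul_assoc]
    gcongr
    exact (wordProd L σ).le_of_opNorm_le (norm_wordProd_le_wordNormSup L σ) _

theorem exists_isAttractor_fam [CompleteSpace E] (hρ : 0 < jsr L) (ht0 : 0 ≤ t)
    (ht : t < 1 / jsr L) : ∃ A, IsAttractor (fam L a q t) A := by
  have := nonempty_of_jsr_pos L hρ
  obtain ⟨n, hn, hlt⟩ := exists_pow_mul_wordNormSup_lt_one L ht0 (by rwa [lt_div_iff₀ hρ] at ht)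
  exact exists_isAttractor_of_lipschitzWith_wordComp (continuous_fam L a q t) hn
    (Real.toNNReal_lt_one.2 hlt) (lipschitzWith_wordComp_fam L a q ht0)

theorem not_isAttractor_fam [ProperSpace E] (hL : ∀ i, Injective (L i)) (hρ : 0 < jsr L)
    (ht : 1 / jsr L ≤ t) (A : Set E) : ¬ IsAttractor (fam L a q t) A := by
  intro hA
  have := nonempty_of_jsr_pos L hρ
  have := nontrivial_of_jsr_pos L hρ
  have ht0 : 0 ≤ t := (one_div_pos.2 hρ).le.trans ht
  set R := diam A + 2
  have hR : 0 < R := by positivity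
  obtain ⟨n, hbound, hn⟩ := ((hA.eventually_dist_lt (continuous_fam L a q t)
    (nonempty_closedBall.2 hR.le) (isCompact_closedBall (0 : E) R)).and
      (eventually_ne_atTop 0)).exists
  have h1 := one_le_pow_mul_wordNormSup L hL hρ (by rwa [div_le_iff₀ hρ] at ht) hn
  obtain ⟨σ, hσ⟩ : ∃ σ : Fin n → Fin N, wordNormSup L n / 2 < ‖wordProd L σ‖ :=
    exists_lt_of_lt_ciSup (half_lt_self (wordNormSup_pos L hL n))
  obtain ⟨u, hu, hLu⟩ := (wordProd L σ).exists_lt_apply_of_lt_opNorm hσ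
  have hmem (s : ℝ) (hs : |s| = R) :
      wordComp (fam L a q t) σ (s • u) ∈ (hutch (fam L a q t))^[n] (closedBall 0 R) := by
    refine wordComp_mem_hutch_iterate _ σ ?_
    rw [mem_closedBall_zero_iff, norm_smul, Real.norm_eq_abs, hs]
    exact mul_le_of_le_one_right hR.le hu.le
  have hlt := hbound _ (hmem R (abs_of_pos hR)) _ (hmem (-R) (by rw [abs_neg, abs_of_pos hR]))
  rw [dist_wordComp_fam L a q ht0, ← sub_smul, map_smul, norm_smul, sub_neg_eq_add,
    Real.norm_of_nonneg (by positivity)] at hlt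
  nlinarith [mul_le_mul_of_nonneg_left hLu.le (mul_nonneg (pow_nonneg ht0 n) hR.le)]

end AffineFamily

theorem stmt0_general {d N : ℕ}
    (L : Fin N → EuclideanSpace ℝ (Fin d) →L[ℝ] EuclideanSpace ℝ (Fin d))
    (hL : ∀ i, Function.Bijective (L i))
    (a q : Fin N → EuclideanSpace ℝ (Fin d))
    (hρ : 0 < jsr L) :
    (∀ t : ℝ, 0 ≤ t → t < 1 / jsr L →
      ∃ A : Set (EuclideanSpace ℝ (Fin d)), IsAttractor (fam L a q t) A) ∧
    (∀ t : ℝ, 1 / jsr L ≤ t →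
      ¬ ∃ A : Set (EuclideanSpace ℝ (Fin d)), IsAttractor (fam L a q t) A) :=
  ⟨fun t ht0 ht => exists_isAttractor_fam L a q t hρ ht0 ht,
    fun t ht ⟨A, hA⟩ => not_isAttractor_fam L a q t (fun i => (hL i).injective) hρ ht A hA⟩

/-- For a one-parameter affine family on `ℝ^d` with joint spectral radius
`ρ(F) > 0` and `t₀ = 1/ρ(F)`: the IFS `F_t` has an attractor for every `0 ≤ t < t₀`, and has
no attractor for every `t ≥ t₀`. -/
theorem stmt0 {d N : ℕ} (hN : 2 ≤ N)
    (L : Fin N → EuclideanSpace ℝ (Fin d) →L[ℝ] EuclideanSpace ℝ (Fin d))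
    (hL : ∀ i, Function.Bijective (L i))
    (a q : Fin N → EuclideanSpace ℝ (Fin d))
    (hρ : 0 < jsr L) :
    (∀ t : ℝ, 0 ≤ t → t < 1 / jsr L →
      ∃ A : Set (EuclideanSpace ℝ (Fin d)), IsAttractor (fam L a q t) A) ∧
    (∀ t : ℝ, 1 / jsr L ≤ t →
      ¬ ∃ A : Set (EuclideanSpace ℝ (Fin d)), IsAttractor (fam L a q t) A) :=
  stmt0_general L hL a q hρ
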